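/- Let p > 3 be prime and let 3 ≤ k < p(p-1) with (p-1) | k. Then (1/p)·Σ_{a=1}^{p-1} a^k + 1/p ≡ B_k + 1/p (mod p²) as rational numbers, i.e., v_p((1/p)Σ_{a=1}^{p-1} a^k - B_k) ≥ 2. -/

import Mathlib

open Finset

variable {p : ℕ} [hp : Fact p.Prime]

/-- Faulhaber-type identity in the form we need. -/
lemma faulhaber_shift (i : ℕ) :
    (∑ a ∈ range p, (a : ℚ) ^ i) / p - bernoulli i
      = ∑ j ∈ range i, bernoulli j * (i.choose j) * (p : ℚ) ^ (i - j) / ((i + 1 - j : ℕ) : ℚ) := by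
  have hp0 : (p : ℚ) ≠ 0 := Nat.cast_ne_zero.mpr hp.out.pos.ne'
  have h1 : ∑ a ∈ range p, (a : ℚ) ^ i
      = (∑ j ∈ range i, bernoulli j * (i.choose j) * (p : ℚ) ^ (i - j) / ((i + 1 - j : ℕ) : ℚ)
          + bernoulli i) * p := by
    calc ∑ a ∈ range p, (a : ℚ) ^ i
        = ∑ j ∈ range (i + 1),
            bernoulli j * ((i + 1).choose j) * (p : ℚ) ^ (i + 1 - j) / (i + 1) :=
          sum_range_pow p i
      _ = ∑ j ∈ range (i + 1),
            bernoulli j * (i.choose j) * (p : ℚ) ^ (i + 1 - j) / ((i + 1 - j : ℕ) : ℚ) := by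
          refine sum_congr rfl fun j hj => ?_
          have hj' : j ≤ i := by rw [mem_range] at hj; omega
          have key : (i.choose j : ℚ) * ((i : ℚ) + 1) = ((i + 1).choose j : ℚ) * ((i + 1 - j : ℕ) : ℚ) := by
            exact_mod_cast congrArg (Nat.cast : ℕ → ℚ) (Nat.choose_mul_succ_eq i j)
          have hm : ((i + 1 - j : ℕ) : ℚ) ≠ 0 := by
            have : 0 < i + 1 - j := by omega
            exact_mod_cast this.ne'
          have hi1 : ((i : ℚ) + 1) ≠ 0 := by positivity
          field_simp
          linear_combination (-1 : ℚ) * bernoulli j * key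
      _ = (∑ j ∈ range i, bernoulli j * (i.choose j) * (p : ℚ) ^ (i - j) / ((i + 1 - j : ℕ) : ℚ)
          + bernoulli i) * p := by
          rw [sum_range_succ, add_mul, Finset.sum_mul]
          congr 1
          · refine sum_congr rfl fun j hj => ?_
            have hj' : j < i := mem_range.mp hj
            have h2 : i + 1 - j = (i - j) + 1 := by omega
            rw [h2, pow_succ]
            ring
          · have h3 : i + 1 - i = 1 := by omega
            rw [h3, Nat.choose_self]
            push_cast
            ring
  rw [h1]
  field_simp
  ring

/-- Norm bound for inverses of natural numbers below `p ^ t`. -/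
lemma norm_natCast_inv_le (m t : ℕ) (hm : 0 < m) (hmt : m < p ^ t) :
    ‖((m : ℚ_[p]))⁻¹‖ ≤ (p : ℝ) ^ ((t : ℤ) - 1) := by
  have hp1 : (1 : ℝ) < p := by exact_mod_cast hp.out.one_lt
  have hp0 : (0 : ℝ) < p := by positivity
  have hdvd : ¬ ((p : ℤ) ^ t ∣ (m : ℤ)) := by
    intro h
    have := Int.le_of_dvd (by exact_mod_cast hm) h
    have h2 : (p : ℤ) ^ t ≤ (m : ℤ) := by exact_mod_cast this
    have h3 : (m : ℤ) < (p : ℤ) ^ t := by exact_mod_cast hmt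
    omega
  have h1 : ¬ (‖((m : ℤ) : ℚ_[p])‖ ≤ (p : ℝ) ^ (-(t : ℤ))) := by
    rw [Padic.norm_int_le_pow_iff_dvd]
    exact hdvd
  rw [Padic.norm_le_pow_iff_norm_lt_pow_add_one] at h1
  push_cast at h1
  have h2 : (p : ℝ) ^ (-(t : ℤ) + 1) ≤ ‖(m : ℚ_[p])‖ := le_of_not_gt h1
  have hmz : ‖(m : ℚ_[p])‖ ≠ 0 := by
    intro h
    rw [norm_eq_zero] at h
    exact_mod_cast (Nat.cast_ne_zero (R := ℚ_[p])).mpr hm.ne' h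
  rw [norm_inv]
  rw [inv_le_comm₀ (lt_of_lt_of_le (zpow_pos hp0 _) h2) (zpow_pos hp0 _)]
  calc ((p:ℝ) ^ ((t : ℤ) - 1))⁻¹ = (p : ℝ) ^ (-(t : ℤ) + 1) := by
        rw [← zpow_neg]; ring_nf
    _ ≤ ‖(m : ℚ_[p])‖ := h2

/-- `p` divides the sum of `i`-th powers over a full residue system when `(p-1) ∤ i`. -/
lemma dvd_sum_pow (i : ℕ) (hi : i ≠ 0) (hnd : ¬ (p - 1) ∣ i) :
    p ∣ ∑ a ∈ range p, a ^ i := by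
  classical
  rw [← ZMod.natCast_eq_zero_iff]
  push_cast
  have h1 : ∑ a ∈ range p, (a : ZMod p) ^ i = ∑ x : ZMod p, x ^ i := by
    refine Finset.sum_nbij' (fun a => (a : ZMod p)) (fun x => x.val) ?_ ?_ ?_ ?_ ?_
    · intro a _; exact mem_univ _
    · intro x _; exact mem_range.mpr (ZMod.val_lt x)
    · intro a ha; exact ZMod.val_cast_of_lt (mem_range.mp ha)
    · intro x _; exact ZMod.natCast_zmod_val x
    · intro a _; rfl
  rw [h1]
  have h2 : ∑ x : ZMod p, x ^ i = ∑ x : (ZMod p)ˣ, (x : ZMod p) ^ i := by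
    let φ : (ZMod p)ˣ ↪ ZMod p := ⟨fun x => x, fun _ _ h => Units.ext h⟩
    have huniv : (univ : Finset (ZMod p)ˣ).map φ = univ \ {0} := by
      ext x
      simp only [mem_map, mem_univ, true_and, mem_sdiff, mem_singleton]
      exact isUnit_iff_ne_zero
    calc ∑ x : ZMod p, x ^ i = ∑ x ∈ univ \ {(0 : ZMod p)}, x ^ i := by
          rw [← sum_sdiff ({0} : Finset (ZMod p)).subset_univ, sum_singleton, zero_pow hi,
            add_zero]
      _ = ∑ x : (ZMod p)ˣ, (x : ZMod p) ^ i := by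
          rw [← huniv, Finset.sum_map]
          rfl
  rw [h2]
  have h3 := FiniteField.sum_pow_units (ZMod p) i
  rw [ZMod.card] at h3
  rw [h3, if_neg hnd]

lemma norm_natCast_le_one (n : ℕ) : ‖(n : ℚ_[p])‖ ≤ 1 := by
  have := Padic.norm_int_le_one (p := p) (n : ℤ)
  push_cast at this
  exact this

/-- Generic bound for one term of the Faulhaber sum. -/
lemma term_norm_le (i j : ℕ) (hj : j < i) (b c e : ℤ)
    (hB : ‖((bernoulli j : ℚ) : ℚ_[p])‖ ≤ (p : ℝ) ^ b)
    (hm : ‖(((i + 1 - j : ℕ) : ℚ_[p]))⁻¹‖ ≤ (p : ℝ) ^ c)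
    (he : b - ((i : ℤ) - (j : ℤ)) + c ≤ e) :
    ‖((bernoulli j * (i.choose j) * (p : ℚ) ^ (i - j) / ((i + 1 - j : ℕ) : ℚ) : ℚ) : ℚ_[p])‖
      ≤ (p : ℝ) ^ e := by
  have hp1 : (1 : ℝ) < p := by exact_mod_cast hp.out.one_lt
  have hp0 : (0 : ℝ) < p := by positivity
  have hcast : ((bernoulli j * (i.choose j) * (p : ℚ) ^ (i - j) / ((i + 1 - j : ℕ) : ℚ) : ℚ) : ℚ_[p])
      = ((bernoulli j : ℚ) : ℚ_[p]) * ((i.choose j : ℕ) : ℚ_[p]) * ((p : ℚ_[p]) ^ (i - j))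
        * (((i + 1 - j : ℕ) : ℚ_[p]))⁻¹ := by
    push_cast
    ring
  rw [hcast, norm_mul, norm_mul, norm_mul, norm_pow, Padic.norm_p]
  calc ‖((bernoulli j : ℚ) : ℚ_[p])‖ * ‖((i.choose j : ℕ) : ℚ_[p])‖ * ((p : ℝ)⁻¹) ^ (i - j)
        * ‖(((i + 1 - j : ℕ) : ℚ_[p]))⁻¹‖
      ≤ (p : ℝ) ^ b * 1 * ((p : ℝ)⁻¹) ^ (i - j) * (p : ℝ) ^ c := by
        refine mul_le_mul (mul_le_mul (mul_le_mul hB (norm_natCast_le_one _)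
          (norm_nonneg _) (by positivity)) le_rfl (by positivity) (by positivity))
          hm (norm_nonneg _) (by positivity)
    _ = (p : ℝ) ^ (b - ((i - j : ℕ) : ℤ) + c) := by
        rw [mul_one, inv_pow, ← zpow_natCast (p : ℝ) (i - j), ← zpow_neg,
          ← zpow_add₀ hp0.ne', ← zpow_add₀ hp0.ne']
        ring_nf
    _ ≤ (p : ℝ) ^ e := by
        apply zpow_le_zpow_right₀ hp1.le
        have : ((i - j : ℕ) : ℤ) = (i : ℤ) - (j : ℤ) := by omega
        omega

lemma norm_sub_le_max' (a b : ℚ_[p]) : ‖a - b‖ ≤ max ‖a‖ ‖b‖ := by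
  rw [sub_eq_add_neg]
  simpa [norm_neg] using IsUltrametricDist.norm_add_le_max a (-b)

/-- All Bernoulli numbers have `p`-adic norm at most `p`. -/
lemma norm_bernoulli_le (i : ℕ) : ‖((bernoulli i : ℚ) : ℚ_[p])‖ ≤ (p : ℝ) ^ (1 : ℤ) := by
  have hp1 : (1 : ℝ) < p := by exact_mod_cast hp.out.one_lt
  have hp0 : (0 : ℝ) < p := by positivity
  induction i using Nat.strong_induction_on with
  | _ i IH =>
  have key := faulhaber_shift (p := p) i
  have hre : (bernoulli i : ℚ) = (∑ a ∈ range p, (a : ℚ) ^ i) / p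
      - ∑ j ∈ range i, bernoulli j * (i.choose j) * (p : ℚ) ^ (i - j) / ((i + 1 - j : ℕ) : ℚ) := by
    linarith [key]
  rw [hre, Rat.cast_sub]
  refine le_trans (norm_sub_le_max' _ _) (max_le ?_ ?_)
  · have hc : ((((∑ a ∈ range p, (a : ℚ) ^ i) / p : ℚ)) : ℚ_[p])
        = ((∑ a ∈ range p, a ^ i : ℕ) : ℚ_[p]) / (p : ℚ_[p]) := by
      push_cast
      ring
    rw [hc, norm_div, Padic.norm_p, div_eq_mul_inv, inv_inv]
    calc ‖((∑ a ∈ range p, a ^ i : ℕ) : ℚ_[p])‖ * (p : ℝ) ≤ 1 * (p : ℝ) := by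
          gcongr
          exact norm_natCast_le_one _
      _ = (p : ℝ) ^ (1 : ℤ) := by simp
  · rw [Rat.cast_sum]
    refine IsUltrametricDist.norm_sum_le_of_forall_le_of_nonneg (by positivity) fun j hj => ?_
    have hj' : j < i := mem_range.mp hj
    exact term_norm_le (p := p) i j hj' 1 ((i + 1 - j : ℕ) - 1) 1
      (IH j hj')
      (norm_natCast_inv_le (i + 1 - j) (i + 1 - j) (by omega)
        (Nat.lt_pow_self hp.out.one_lt))
      (by omega)

omit hp in
lemma lt_pow_pred (hp2 : 2 ≤ p) (m : ℕ) (hm : 3 ≤ m) : m < p ^ (m - 1) := by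
  have h1 : m - 2 < 2 ^ (m - 2) := Nat.lt_two_pow_self
  have h2 : 2 ^ (m - 1) = 2 * 2 ^ (m - 2) := by
    rw [← pow_succ']
    congr 1
    omega
  have h3 : m < 2 ^ (m - 1) := by omega
  calc m < 2 ^ (m - 1) := h3
    _ ≤ p ^ (m - 1) := Nat.pow_le_pow_left hp2 _

/-- Von Staudt–Clausen type bound: if `(p-1) ∤ i` then `bernoulli i` is a `p`-adic integer. -/
lemma norm_bernoulli_le_one (hp3 : 3 < p) (i : ℕ) (hi : i ≠ 0) (hnd : ¬ (p - 1) ∣ i) :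
    ‖((bernoulli i : ℚ) : ℚ_[p])‖ ≤ (p : ℝ) ^ (0 : ℤ) := by
  have hp1 : (1 : ℝ) < p := by exact_mod_cast hp.out.one_lt
  have hp0 : (0 : ℝ) < p := by positivity
  have key := faulhaber_shift (p := p) i
  have hre : (bernoulli i : ℚ) = (∑ a ∈ range p, (a : ℚ) ^ i) / p
      - ∑ j ∈ range i, bernoulli j * (i.choose j) * (p : ℚ) ^ (i - j) / ((i + 1 - j : ℕ) : ℚ) := by
    linarith [key]
  rw [hre, Rat.cast_sub]
  refine le_trans (norm_sub_le_max' _ _) (max_le ?_ ?_)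
  · have hc : ((((∑ a ∈ range p, (a : ℚ) ^ i) / p : ℚ)) : ℚ_[p])
        = ((∑ a ∈ range p, a ^ i : ℕ) : ℚ_[p]) / (p : ℚ_[p]) := by
      push_cast
      ring
    rw [hc, norm_div, Padic.norm_p, div_eq_mul_inv, inv_inv]
    have hdvd : (p : ℤ) ^ 1 ∣ ((∑ a ∈ range p, a ^ i : ℕ) : ℤ) := by
      rw [pow_one]
      exact_mod_cast dvd_sum_pow i hi hnd
    have hn : ‖((∑ a ∈ range p, a ^ i : ℕ) : ℚ_[p])‖ ≤ (p : ℝ) ^ (-1 : ℤ) := by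
      have h4 : ((∑ a ∈ range p, a ^ i : ℕ) : ℚ_[p])
          = (((∑ a ∈ range p, a ^ i : ℕ) : ℤ) : ℚ_[p]) := by push_cast; ring
      rw [h4]
      exact_mod_cast (Padic.norm_int_le_pow_iff_dvd _ 1).mpr hdvd
    calc ‖((∑ a ∈ range p, a ^ i : ℕ) : ℚ_[p])‖ * (p : ℝ) ≤ (p : ℝ) ^ (-1 : ℤ) * (p : ℝ) := by
          gcongr
      _ = (p : ℝ) ^ (0 : ℤ) := by
          rw [zpow_neg, zpow_one, inv_mul_cancel₀ hp0.ne', zpow_zero]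
  · rw [Rat.cast_sum]
    refine IsUltrametricDist.norm_sum_le_of_forall_le_of_nonneg (by positivity) fun j hj => ?_
    have hj' : j < i := mem_range.mp hj
    by_cases hji : j = i - 1
    · -- m = 2
      refine term_norm_le (p := p) i j hj' 1 ((1 : ℤ) - 1) 0 (norm_bernoulli_le j) ?_ (by omega)
      have h2 : i + 1 - j = 2 := by omega
      rw [h2]
      exact norm_natCast_inv_le (p := p) 2 1 (by omega) (by rw [pow_one]; omega)
    · -- m ≥ 3
      refine term_norm_le (p := p) i j hj' 1 (((i + 1 - j : ℕ) : ℤ) - 2) 0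
        (norm_bernoulli_le j) ?_ (by omega)
      have hm3 : 3 ≤ i + 1 - j := by omega
      have := norm_natCast_inv_le (p := p) (i + 1 - j) (i + 1 - j - 1) (by omega)
        (lt_pow_pred hp.out.two_le _ hm3)
      calc ‖(((i + 1 - j : ℕ) : ℚ_[p]))⁻¹‖ ≤ (p : ℝ) ^ (((i + 1 - j - 1 : ℕ) : ℤ) - 1) := this
        _ ≤ (p : ℝ) ^ (((i + 1 - j : ℕ) : ℤ) - 2) := by
            apply zpow_le_zpow_right₀ hp1.le
            omega

/-- Lemma (power sums, case `(p-1) ∣ k`): for a prime `p > 3` and `3 ≤ k < p(p-1)`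
with `(p-1) ∣ k`, one has `(1/p)·∑_{a=1}^{p-1} a^k + 1/p ≡ B_k + 1/p (mod p²)`,
i.e. the `p`-adic norm of `(1/p)·∑_{a=1}^{p-1} a^k - B_k` is at most `p⁻²`. -/
theorem powerSum_bernoulli_case_a (p : ℕ) [hp : Fact p.Prime] (hp3 : 3 < p)
    (k : ℕ) (hk3 : 3 ≤ k) (hklt : k < p * (p - 1)) (hdvd : (p - 1) ∣ k) :
    ‖(((1 / p) * ∑ a ∈ Finset.Icc 1 (p - 1), (a : ℚ) ^ k - bernoulli k : ℚ) : ℚ_[p])‖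
      ≤ (p : ℝ) ^ (-2 : ℤ) := by
  have hp1 : (1 : ℝ) < p := by exact_mod_cast hp.out.one_lt
  have hp0 : (0 : ℝ) < p := by positivity
  have hodd : Odd p := hp.out.odd_of_ne_two (by omega)
  have hp5 : 5 ≤ p := by
    have h4 : p ≠ 4 := fun h => by
      rw [h] at hp
      exact (by norm_num : ¬ Nat.Prime 4) hp.out
    omega
  have hev : Even (p - 1) := Nat.Odd.sub_odd hodd odd_one
  have hkev : Even k := by
    obtain ⟨c, hc⟩ := hdvd
    rw [hc]
    exact hev.mul_right c
  have hk4 : 4 ≤ k := by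
    have h1 := Nat.le_of_dvd (by omega) hdvd
    rcases hkev with ⟨t, ht⟩
    omega
  have hIcc : ∑ a ∈ Finset.Icc 1 (p - 1), (a : ℚ) ^ k = ∑ a ∈ range p, (a : ℚ) ^ k := by
    rw [range_eq_Ico, Finset.sum_eq_sum_Ico_succ_bot hp.out.pos, ← Finset.Ico_add_one_right_eq_Icc,
      show p - 1 + 1 = p by omega, Nat.cast_zero, zero_pow (show k ≠ 0 by omega), zero_add]
  have hmain : (1 / (p : ℚ)) * ∑ a ∈ Finset.Icc 1 (p - 1), (a : ℚ) ^ k - bernoulli k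
      = ∑ j ∈ range k, bernoulli j * (k.choose j) * (p : ℚ) ^ (k - j) / ((k + 1 - j : ℕ) : ℚ) := by
    rw [hIcc, ← faulhaber_shift (p := p) k]
    ring
  rw [hmain, Rat.cast_sum]
  refine IsUltrametricDist.norm_sum_le_of_forall_le_of_nonneg (by positivity) fun j hj => ?_
  have hj' : j < k := mem_range.mp hj
  by_cases h1 : j = k - 1
  · have hodd' : Odd j := by
      subst h1
      exact Nat.Even.sub_odd (by omega) hkev odd_one
    have hb0 : bernoulli j = 0 := by
      rw [bernoulli_eq_bernoulli'_of_ne_one (by omega)]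
      exact bernoulli'_eq_zero_of_odd hodd' (by omega)
    simp only [hb0, zero_mul, zero_div, Rat.cast_zero, norm_zero]
    positivity
  by_cases h2 : j = k - 2
  · refine term_norm_le (p := p) k j hj' 0 ((1 : ℤ) - 1) (-2) ?_ ?_ (by omega)
    · refine norm_bernoulli_le_one hp3 j (by omega) fun hd => ?_
      have h5 : (p - 1) ∣ (k - j) := Nat.dvd_sub hdvd hd
      have h6 : k - j = 2 := by omega
      rw [h6] at h5
      have := Nat.le_of_dvd (by omega) h5
      omega
    · have h3 : k + 1 - j = 3 := by omega
      rw [h3]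
      exact norm_natCast_inv_le 3 1 (by omega) (by rw [pow_one]; omega)
  by_cases h3 : j = k - 3
  · refine term_norm_le (p := p) k j hj' 1 ((1 : ℤ) - 1) (-2) (norm_bernoulli_le j) ?_ (by omega)
    have h4 : k + 1 - j = 4 := by omega
    rw [h4]
    exact norm_natCast_inv_le 4 1 (by omega) (by rw [pow_one]; omega)
  · refine term_norm_le (p := p) k j hj' 1 ((2 : ℤ) - 1) (-2) (norm_bernoulli_le j) ?_ (by omega)
    apply norm_natCast_inv_le (k + 1 - j) 2 (by omega)
    have hpp : p * (p - 1) < p ^ 2 := by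
      have h6 := Nat.mul_lt_mul_of_pos_left (show p - 1 < p by omega) hp.out.pos
      rw [pow_two]
      exact h6
    omega
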